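/- Let n ≥ 1 and, in ℤ[x, y], write s_k = ∑_{i+j=k} x^i y^j (sum over i, j ≥ 0). Then the ideal of ℤ[x, y] generated by s_{n+1} and x·y·s_n equals the ideal generated by s_{n+1}, x^{n+2} and y^{n+2}. -/
import Mathlib


open MvPolynomial

/-- The complete homogeneous polynomial `s k = ∑_{i+j=k} x^i y^j` in `ℤ[x, y]`. -/
noncomputable def hsum (k : ℕ) : MvPolynomial (Fin 2) ℤ :=
  ∑ i ∈ Finset.range (k + 1), X 0 ^ i * X 1 ^ (k - i)

lemma hsum_succ (k : ℕ) : hsum (k + 1) = X 0 ^ (k + 1) + X 1 * hsum k := by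
  unfold hsum
  rw [Finset.sum_range_succ, Finset.mul_sum]
  rw [Nat.sub_self, pow_zero, mul_one, add_comm]
  congr 1
  refine Finset.sum_congr rfl fun i hi => ?_
  have hik : i ≤ k := Nat.lt_succ_iff.mp (Finset.mem_range.mp hi)
  have : k + 1 - i = (k - i) + 1 := by omega
  rw [this, pow_succ]
  ring

lemma hsum_succ' (k : ℕ) : hsum (k + 1) = X 1 ^ (k + 1) + X 0 * hsum k := by
  unfold hsum
  rw [Finset.sum_range_succ', Finset.mul_sum]
  rw [pow_zero, one_mul, Nat.sub_zero, add_comm]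
  congr 1
  refine Finset.sum_congr rfl fun i hi => ?_
  have : k + 1 - (i + 1) = k - i := by omega
  rw [this, pow_succ]
  ring

/-- For `n ≥ 1`, in `ℤ[x, y]` the ideal generated by `s_{n+1}` and `x·y·s_n` equals the
ideal generated by `s_{n+1}`, `x^{n+2}` and `y^{n+2}`. -/
theorem ideal_eq_of_hsum (n : ℕ) (hn : 1 ≤ n) :
    Ideal.span {hsum (n + 1), X 0 * X 1 * hsum n} =
      Ideal.span {hsum (n + 1), (X 0 : MvPolynomial (Fin 2) ℤ) ^ (n + 2), X 1 ^ (n + 2)} := by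
  have hx : (X 0 : MvPolynomial (Fin 2) ℤ) ^ (n + 2) =
      X 0 * hsum (n + 1) - X 0 * X 1 * hsum n := by
    rw [hsum_succ n]; ring
  have hy : (X 1 : MvPolynomial (Fin 2) ℤ) ^ (n + 2) =
      X 1 * hsum (n + 1) - X 0 * X 1 * hsum n := by
    rw [hsum_succ' n]; ring
  have hxy : X 0 * X 1 * hsum n =
      X 0 * hsum (n + 1) - (X 0 : MvPolynomial (Fin 2) ℤ) ^ (n + 2) := by
    rw [hx]; ring
  apply le_antisymm <;> rw [Ideal.span_le] <;> intro p hp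
  · rcases hp with h | h
    · exact Ideal.subset_span (by subst h; left; rfl)
    · simp only [Set.mem_singleton_iff] at h
      subst h
      rw [hxy]
      exact sub_mem (Ideal.mul_mem_left _ _ (Ideal.subset_span (by left; rfl)))
        (Ideal.subset_span (by right; left; rfl))
  · rcases hp with h | h | h
    · exact Ideal.subset_span (by subst h; left; rfl)
    · subst h
      rw [hx]
      exact sub_mem (Ideal.mul_mem_left _ _ (Ideal.subset_span (by left; rfl)))
        (Ideal.subset_span (by right; rfl))
    · simp only [Set.mem_singleton_iff] at h
      subst h
      rw [hy]
      exact sub_mem (Ideal.mul_mem_left _ _ (Ideal.subset_span (by left; rfl)))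
        (Ideal.subset_span (by right; rfl))
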